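/- Let d ≥ 1, let h be a symmetric norm on ℝ^d, and for each i ∈ [d] let N_i be a norm on ℝ^{n_i}. On the product space V = ℝ^{n_1} × ... × ℝ^{n_d}, define the norm ‖v‖_V = h(N_1(v_1), ..., N_d(v_d)) for v = (v_1, ..., v_d), and equip V with the inner product ⟨v, w⟩ = Σ_i ⟨v_i, w_i⟩. Then the dual norm of ‖·‖_V satisfies ‖w‖_{V*} = h*(N_1*(w_1), ..., N_d*(w_d)) for all w = (w_1, ..., w_d) ∈ V. -/

import Mathlib

noncomputable section
open scoped BigOperators

/-- `N` is a norm on `ℝⁿ`. -/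
def IsNorm {n : ℕ} (N : (Fin n → ℝ) → ℝ) : Prop :=
  (∀ v, N v = 0 → v = 0) ∧ (∀ (c : ℝ) (v), N (c • v) = |c| * N v) ∧
  (∀ v w, N (v + w) ≤ N v + N w)

/-- `N` is a symmetric norm on `ℝⁿ`. -/
def IsSymmetricNorm {n : ℕ} (N : (Fin n → ℝ) → ℝ) : Prop :=
  IsNorm N ∧ (∀ (σ : Equiv.Perm (Fin n)) (v : Fin n → ℝ), N (fun i => v (σ i)) = N v) ∧
  (∀ v : Fin n → ℝ, N (fun i => |v i|) = N v)

/-- The dual norm `N*(w) = sup {⟨v,w⟩ : N(v) ≤ 1}` on `ℝᵐ`. -/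
def dualNorm {m : ℕ} (N : (Fin m → ℝ) → ℝ) (w : Fin m → ℝ) : ℝ :=
  sSup {t | ∃ v, N v ≤ 1 ∧ t = ∑ i, v i * w i}

/-- The dual norm on the product space `V = ℝ^{n₁} × ⋯ × ℝ^{n_d}` with respect to the
inner product `⟨v, w⟩ = ∑ i ⟨vᵢ, wᵢ⟩`. -/
def dualNormPi {d : ℕ} {m : Fin d → ℕ} (NV : (∀ i, Fin (m i) → ℝ) → ℝ)
    (w : ∀ i, Fin (m i) → ℝ) : ℝ :=
  sSup {t | ∃ v, NV v ≤ 1 ∧ t = ∑ i, ∑ j, v i j * w i j}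

/-!
One inequality is Hölder's inequality used twice:
`⟨v, w⟩ ≤ ∑ i, Nᵢ(vᵢ) Nᵢ*(wᵢ) ≤ h(N(v)) h*(N*(w))`.
For the other, every dual norm on `ℝⁿ` is attained, the unit ball being compact.
If `α` attains `h*(N*(w))` and `vᵢ` attains `Nᵢ*(wᵢ)`, then `uᵢ = |αᵢ| vᵢ` is admissible,
since a norm invariant under taking absolute values is monotone in them,
and `⟨u, w⟩ ≥ ∑ i, αᵢ Nᵢ*(wᵢ)`.
-/

namespace IsNorm

variable {n : ℕ} {N : (Fin n → ℝ) → ℝ}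

def toSeminorm (hN : IsNorm N) : Seminorm ℝ (Fin n → ℝ) :=
  Seminorm.of N hN.2.2 fun c v => by rw [hN.2.1, Real.norm_eq_abs]

lemma map_zero (hN : IsNorm N) : N 0 = 0 := _root_.map_zero hN.toSeminorm

lemma nonneg (hN : IsNorm N) (v : Fin n → ℝ) : 0 ≤ N v := apply_nonneg hN.toSeminorm v

lemma pos (hN : IsNorm N) {v : Fin n → ℝ} (hv : v ≠ 0) : 0 < N v :=
  (hN.nonneg v).lt_of_ne fun h => hv (hN.1 v h.symm)

lemma continuous (hN : IsNorm N) : Continuous N :=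
  hN.toSeminorm.convexOn.locallyLipschitz.continuous

lemma exists_pos_mul_norm_le (hN : IsNorm N) : ∃ c > 0, ∀ v, c * ‖v‖ ≤ N v := by
  obtain rfl | hn := eq_or_ne n 0
  · refine ⟨1, one_pos, fun v => ?_⟩
    rw [Subsingleton.elim v 0, norm_zero, mul_zero, hN.map_zero]
  have : Nonempty (Fin n) := ⟨⟨0, Nat.pos_of_ne_zero hn⟩⟩
  obtain ⟨x₀, hx₀, hmin⟩ := (isCompact_sphere (0 : Fin n → ℝ) 1).exists_isMinOn
    (NormedSpace.sphere_nonempty.2 zero_le_one) hN.continuous.continuousOn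
  refine ⟨N x₀, hN.pos (ne_zero_of_mem_unit_sphere ⟨x₀, hx₀⟩), fun v => ?_⟩
  obtain rfl | hv := eq_or_ne v 0
  · simp [hN.map_zero]
  have hv' : 0 < ‖v‖ := norm_pos_iff.2 hv
  have : N x₀ ≤ N (‖v‖⁻¹ • v) := hmin (by simp [norm_smul, hv'.ne'])
  rw [hN.2.1, abs_inv, abs_norm] at this
  calc N x₀ * ‖v‖ ≤ ‖v‖⁻¹ * N v * ‖v‖ := by gcongr
    _ = N v := by field_simp

lemma isCompact_setOf_le_one (hN : IsNorm N) : IsCompact {v | N v ≤ 1} := by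
  obtain ⟨c, hc, hle⟩ := hN.exists_pos_mul_norm_le
  refine Metric.isCompact_of_isClosed_isBounded (isClosed_le hN.continuous continuous_const)
    ((Metric.isBounded_closedBall (x := 0) (r := 1 / c)).subset fun v hv => ?_)
  rw [mem_closedBall_zero_iff, le_div_iff₀' hc]
  exact (hle v).trans hv

lemma exists_isGreatest_pairing (hN : IsNorm N) (w : Fin n → ℝ) :
    ∃ v, N v ≤ 1 ∧
      IsGreatest {t | ∃ v, N v ≤ 1 ∧ t = ∑ i, v i * w i} (∑ i, v i * w i) := by
  obtain ⟨v, hv, hmax⟩ := hN.isCompact_setOf_le_one.exists_isMaxOn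
    ⟨0, by simp [hN.map_zero]⟩
    (by fun_prop : Continuous fun v : Fin n → ℝ => ∑ i, v i * w i).continuousOn
  exact ⟨v, hv, ⟨v, hv, rfl⟩, by rintro _ ⟨u, hu, rfl⟩; exact hmax hu⟩

lemma exists_dualNorm_eq (hN : IsNorm N) (w : Fin n → ℝ) :
    ∃ v, N v ≤ 1 ∧ ∑ i, v i * w i = dualNorm N w := by
  obtain ⟨v, hv, hgreat⟩ := hN.exists_isGreatest_pairing w
  exact ⟨v, hv, hgreat.csSup_eq.symm⟩

lemma le_dualNorm (hN : IsNorm N) (w : Fin n → ℝ) {v : Fin n → ℝ} (hv : N v ≤ 1) :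
    ∑ i, v i * w i ≤ dualNorm N w := by
  obtain ⟨u, -, hgreat⟩ := hN.exists_isGreatest_pairing w
  rw [dualNorm, hgreat.csSup_eq]
  exact hgreat.2 ⟨v, hv, rfl⟩

lemma dualNorm_nonneg (hN : IsNorm N) (w : Fin n → ℝ) : 0 ≤ dualNorm N w := by
  simpa using hN.le_dualNorm w (v := 0) (by simp [hN.map_zero])

lemma sum_mul_le_mul_dualNorm (hN : IsNorm N) (v w : Fin n → ℝ) :
    ∑ i, v i * w i ≤ N v * dualNorm N w := by
  obtain rfl | hv := eq_or_ne v 0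
  · simp [hN.map_zero]
  have hNv := hN.pos hv
  have := hN.le_dualNorm w (v := (N v)⁻¹ • v)
    (by rw [hN.2.1, abs_inv, abs_of_pos hNv, inv_mul_cancel₀ hNv.ne'])
  simp only [Pi.smul_apply, smul_eq_mul, mul_assoc, ← Finset.mul_sum] at this
  rwa [inv_mul_le_iff₀ hNv] at this

/-- `update y a b` is a convex combination of `y` and its reflection in the coordinate `a`. -/
lemma apply_update_le (hN : IsNorm N) (habs : ∀ v : Fin n → ℝ, N (fun i => |v i|) = N v)
    (y : Fin n → ℝ) (a : Fin n) {b : ℝ} (hb : |b| ≤ |y a|) :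
    N (Function.update y a b) ≤ N y := by
  set t := b / y a
  have hbt : b = t * y a := by
    obtain hy | hy := eq_or_ne (y a) 0
    · simp_all
    · exact (div_mul_cancel₀ b hy).symm
  have ht : |t| ≤ 1 := by
    rw [abs_div]; exact div_le_one_of_le₀ hb (abs_nonneg _)
  set y' := Function.update y a (-y a)
  have hy' : N y' = N y := by
    rw [← habs y', ← habs y]
    congr 1; funext i
    obtain rfl | hi := eq_or_ne i a <;> simp_all [y']
  have hcomb : Function.update y a b = ((1 + t) / 2) • y + ((1 - t) / 2) • y' := by
    funext i
    obtain rfl | hi := eq_or_ne i a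
    · simp [y', hbt]; ring
    · simp [y', hi]; ring
  have h1 : 0 ≤ 1 + t := by linarith [neg_abs_le t]
  have h2 : 0 ≤ 1 - t := by linarith [le_abs_self t]
  calc N (Function.update y a b) ≤ N (((1 + t) / 2) • y) + N (((1 - t) / 2) • y') := by
        rw [hcomb]; exact hN.2.2 _ _
    _ = N y := by
        rw [hN.2.1, hN.2.1, abs_of_nonneg (by linarith), abs_of_nonneg (by linarith), hy']
        ring

lemma le_of_forall_abs_le (hN : IsNorm N) (habs : ∀ v : Fin n → ℝ, N (fun i => |v i|) = N v)
    {x y : Fin n → ℝ} (hxy : ∀ i, |x i| ≤ |y i|) : N x ≤ N y := by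
  classical
  suffices ∀ s : Finset (Fin n), ∀ x : Fin n → ℝ, (∀ i ∉ s, x i = y i) →
      (∀ i, |x i| ≤ |y i|) → N x ≤ N y from this Finset.univ x (by simp) hxy
  intro s
  induction s using Finset.induction with
  | empty => intro x hx _; rw [funext fun i => hx i (Finset.notMem_empty i)]
  | insert a s _ ih =>
    intro x hx hxy
    set x' := Function.update x a (y a)
    have hx' : N x' ≤ N y := ih x' (fun i hi => by
        obtain rfl | hia := eq_or_ne i a
        · simp [x']
        · simp [x', hia, hx i (by simp [hia, hi])])
      (fun i => by obtain rfl | hia := eq_or_ne i a <;> simp [x', *])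
    calc N x = N (Function.update x' a (x a)) := by simp [x']
      _ ≤ N x' := hN.apply_update_le habs x' a (by simpa [x'] using hxy a)
      _ ≤ N y := hx'

end IsNorm

theorem h_sum_dual_norm_general {d : ℕ} (m : Fin d → ℕ)
    (h : (Fin d → ℝ) → ℝ) (hh : IsSymmetricNorm h)
    (N : ∀ i, (Fin (m i) → ℝ) → ℝ) (hN : ∀ i, IsNorm (N i))
    (w : ∀ i, Fin (m i) → ℝ) :
    dualNormPi (fun v => h (fun i => N i (v i))) w
      = dualNorm h (fun i => dualNorm (N i) (w i)) := by
  obtain ⟨hh, -, habs⟩ := hh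
  set D := fun i => dualNorm (N i) (w i)
  have upper : ∀ v : ∀ i, Fin (m i) → ℝ, h (fun i => N i (v i)) ≤ 1 →
      ∑ i, ∑ j, v i j * w i j ≤ dualNorm h D := fun v hv =>
    calc ∑ i, ∑ j, v i j * w i j ≤ ∑ i, N i (v i) * D i :=
          Finset.sum_le_sum fun i _ => (hN i).sum_mul_le_mul_dualNorm (v i) (w i)
      _ ≤ dualNorm h D := hh.le_dualNorm D hv
  obtain ⟨α, hα, hαD⟩ := hh.exists_dualNorm_eq D
  choose v hv hvD using fun i => (hN i).exists_dualNorm_eq (w i)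
  set u : ∀ i, Fin (m i) → ℝ := fun i => |α i| • v i
  have hu : h (fun i => N i (u i)) ≤ 1 := by
    refine (hh.le_of_forall_abs_le habs fun i => ?_).trans hα
    rw [(hN i).2.1, abs_abs, abs_of_nonneg (mul_nonneg (abs_nonneg _) ((hN i).nonneg _))]
    exact mul_le_of_le_one_right (abs_nonneg _) (hv i)
  have lower : dualNorm h D ≤ ∑ i, ∑ j, u i j * w i j :=
    calc dualNorm h D = ∑ i, α i * D i := hαD.symm
      _ ≤ ∑ i, |α i| * D i := Finset.sum_le_sum fun i _ =>
          mul_le_mul_of_nonneg_right (le_abs_self _) ((hN i).dualNorm_nonneg _)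
      _ = ∑ i, ∑ j, u i j * w i j := by simp [u, D, ← hvD, Finset.mul_sum, mul_assoc]
  exact le_antisymm (csSup_le ⟨_, u, hu, rfl⟩ fun _ ⟨v, hv, ht⟩ => ht ▸ upper v hv)
    (lower.trans (le_csSup ⟨_, fun _ ⟨v, hv, ht⟩ => ht ▸ upper v hv⟩ ⟨u, hu, rfl⟩))

/-- Duality for `h`-sums: if `h` is a symmetric norm on `ℝ^d` and `Nᵢ` are norms on
`ℝ^{nᵢ}`, then the dual of the norm `v ↦ h(N₁(v₁), …, N_d(v_d))` on the product space is
`w ↦ h*(N₁*(w₁), …, N_d*(w_d))`. -/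
theorem h_sum_dual_norm {d : ℕ} (hd : 1 ≤ d) (m : Fin d → ℕ)
    (h : (Fin d → ℝ) → ℝ) (hh : IsSymmetricNorm h)
    (N : ∀ i, (Fin (m i) → ℝ) → ℝ) (hN : ∀ i, IsNorm (N i))
    (w : ∀ i, Fin (m i) → ℝ) :
    dualNormPi (fun v => h (fun i => N i (v i))) w
      = dualNorm h (fun i => dualNorm (N i) (w i)) :=
  h_sum_dual_norm_general m h hh N hN w
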